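/- For every s with 0 < s ≤ 2, the measure κ_s is invariant under the point reflection (x,y) ↦ (1−x, 1−y) and under the transposition (x,y) ↦ (y,x); that is, the pushforwards of κ_s under these two maps both equal κ_s. (Symmetry of the limiting configuration measure, stated after Theorem 1.3) -/

import Mathlib

open MeasureTheory

/-- `L_x^-(s) = x + s - 2√(sx)`. -/
noncomputable def Lminus (x s : ℝ) : ℝ := x + s - 2 * Real.sqrt (s * x)

/-- `L_x^+(s) = x - s + 2√(s(1-x))`. -/
noncomputable def Lplus (x s : ℝ) : ℝ := x - s + 2 * Real.sqrt (s * (1 - x))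

/-- `W_s^- = (1 - √(2s - s²))/2`. -/
noncomputable def Wminus (s : ℝ) : ℝ := (1 - Real.sqrt (2 * s - s ^ 2)) / 2

/-- `W_s^+ = (1 + √(2s - s²))/2`. -/
noncomputable def Wplus (s : ℝ) : ℝ := (1 + Real.sqrt (2 * s - s ^ 2)) / 2

/-- The measure `w(x) δ_{y = g(x)} dx` on `ℝ²`, concentrated on the curve
`{(x, g(x)) : x ∈ [0, 1]}`, assigning measure `∫_A w(x) dx` to `A × ℝ` for Borel
`A ⊆ [0, 1]`. -/
noncomputable def curveMeasure (g w : ℝ → ℝ) : Measure (ℝ × ℝ) :=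
  Measure.map (fun x => (x, g x))
    ((volume.restrict (Set.Icc (0 : ℝ) 1)).withDensity fun x => ENNReal.ofReal (w x))

open Classical in
/-- The limiting configuration measure `κ_s` of Theorem 1.2. -/
noncomputable def kappa (s : ℝ) : Measure (ℝ × ℝ) :=
  ((volume : Measure (ℝ × ℝ)).withDensity fun p =>
      ENNReal.ofReal
        (if Lminus p.1 s < p.2 ∧ p.2 < Lplus p.1 s ∧ p.1 - s < p.2 ∧ p.2 < p.1 + s
         then 1 / (2 * s) else 0))
  + curveMeasure (fun x => 1 - x)
      (fun x => if 1 < s ∧ ¬(Wminus s < x ∧ x < Wplus s) then 1 else 0)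
  + curveMeasure (fun x => Lminus x s)
      (fun x =>
        ((if s ≤ 1 ∧ x < s then 1 else 0)
          + (if 1 < s ∧ Wminus s < x ∧ x < Wplus s then 1 else 0))
        * (1 - Real.sqrt (x / s)))
  + curveMeasure (fun x => Lplus x s)
      (fun x =>
        ((if s ≤ 1 ∧ 1 - s < x then 1 else 0)
          + (if 1 < s ∧ Wminus s < x ∧ x < Wplus s then 1 else 0))
        * (1 - Real.sqrt ((1 - x) / s)))

/-! The reflection `(x, y) ↦ (1 - x, 1 - y)` preserves the bulk region and the antidiagonal
and exchanges the two parabolic arcs, since `L_{1-x}^-(s) = 1 - L_x^+(s)`. The transposition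
preserves the bulk region because `(x + s - y)² - 4sx = (y + s - x)² - 4sy`. On the interval
carrying the weight of the lower arc, `x ↦ L_x^-(s)` is an involution preserving the measure
`(1 - √(x/s)) dx`: in the variable `t = √(x/s)` it is `t ↦ 1 - t`, and the measure is
`2s t(1 - t) dt`. So the graph of this involution is symmetric, and the upper arc follows by
conjugating with the reflection. -/

open MeasureTheory Measure Set
open scoped ENNReal

section PushForward

variable {α β : Type*} [MeasurableSpace α] [MeasurableSpace β]

lemma MeasurableEmbedding.map_withDensity_comp {f : α → β} (hf : MeasurableEmbedding f)
    (μ : Measure α) (g : β → ℝ≥0∞) :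
    (μ.withDensity (g ∘ f)).map f = (μ.map f).withDensity g := by
  ext t ht
  rw [hf.map_apply, withDensity_apply _ (hf.measurable ht), withDensity_apply _ ht,
    hf.restrict_map, hf.lintegral_map]
  rfl

lemma MeasureTheory.MeasurePreserving.map_withDensity_eq_self {μ : Measure α} {f : α → α}
    (hf : MeasurePreserving f μ μ) (hf' : MeasurableEmbedding f) {g : α → ℝ≥0∞}
    (hg : ∀ x, g (f x) = g x) :
    (μ.withDensity g).map f = μ.withDensity g := by
  conv_lhs => rw [← funext hg]
  rw [show (fun x => g (f x)) = g ∘ f from rfl, hf'.map_withDensity_comp, hf.map_eq]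

lemma map_swap_map_graph {ν : Measure α} {g : α → α} (hg : Measurable g) (hν : ν.map g = ν)
    (hgg : ∀ᵐ x ∂ν, g (g x) = x) :
    (ν.map fun x => (x, g x)).map Prod.swap = ν.map fun x => (x, g x) := by
  have hgraph : Measurable fun x => (x, g x) := measurable_id.prodMk hg
  calc (ν.map fun x => (x, g x)).map Prod.swap
      = ν.map (Prod.swap ∘ fun x => (x, g x)) := map_map measurable_swap hgraph
    _ = ν.map ((fun x => (x, g x)) ∘ g) := map_congr (hgg.mono fun x hx => by simp [hx])
    _ = ν.map fun x => (x, g x) := by rw [← map_map hgraph hg, hν]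

lemma map_restrict_withDensity_eq_self {S : Set ℝ} (hS : MeasurableSet S) {f f' : ℝ → ℝ}
    (hf : Measurable f) (hf' : ∀ x ∈ S, HasDerivWithinAt f (f' x) S x) (hfS : MapsTo f S S)
    (hff : ∀ x ∈ S, f (f x) = x) {ρ : ℝ → ℝ≥0∞}
    (hρ : ∀ x ∈ S, ρ x = ENNReal.ofReal |f' x| * ρ (f x)) :
    ((volume.restrict S).withDensity ρ).map f = (volume.restrict S).withDensity ρ := by
  have hbij : BijOn f S S := InvOn.bijOn ⟨hff, hff⟩ hfS hfS
  ext t ht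
  rw [map_apply hf ht, withDensity_apply _ (hf ht), withDensity_apply _ ht,
    restrict_restrict (hf ht), restrict_restrict ht]
  have himage : f '' (f ⁻¹' t ∩ S) = t ∩ S := by rw [image_preimage_inter, hbij.image_eq]
  rw [← himage, lintegral_image_eq_lintegral_abs_deriv_mul ((hf ht).inter hS)
    (fun x hx => (hf' x hx.2).mono inter_subset_right) (hbij.injOn.mono inter_subset_right)]
  exact setLIntegral_congr_fun ((hf ht).inter hS) fun x hx => hρ x hx.2

lemma map_one_sub_restrict_Icc :
    (volume.restrict (Icc (0 : ℝ) 1)).map (fun x => 1 - x) = volume.restrict (Icc 0 1) := by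
  have hpre : (fun x : ℝ => 1 - x) ⁻¹' Icc 0 1 = Icc 0 1 := by
    rw [preimage_const_sub_Icc, sub_zero, sub_self]
  rw [← hpre, ← (measurableEmbedding_subLeft 1).restrict_map,
    (Measure.measurePreserving_sub_left volume 1).map_eq, hpre]

end PushForward

noncomputable def weightMeasure (w : ℝ → ℝ) : Measure ℝ :=
  (volume.restrict (Icc 0 1)).withDensity fun x => ENNReal.ofReal (w x)

lemma curveMeasure_eq_map (g w : ℝ → ℝ) :
    curveMeasure g w = (weightMeasure w).map fun x => (x, g x) := rfl

lemma map_one_sub_weightMeasure (w : ℝ → ℝ) :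
    (weightMeasure w).map (fun x => 1 - x) = weightMeasure fun x => w (1 - x) := by
  have hdensity :
      (fun x => ENNReal.ofReal (w x)) = (fun x => ENNReal.ofReal (w (1 - x))) ∘ (1 - ·) := by
    funext x; simp
  rw [weightMeasure, hdensity, (measurableEmbedding_subLeft 1).map_withDensity_comp,
    map_one_sub_restrict_Icc, weightMeasure]

lemma map_reflect_curveMeasure {g : ℝ → ℝ} (hg : Measurable g) (w : ℝ → ℝ) :
    (curveMeasure g w).map (fun p : ℝ × ℝ => (1 - p.1, 1 - p.2)) =
      curveMeasure (fun x => 1 - g (1 - x)) (fun x => w (1 - x)) := by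
  have hgraph : (fun p : ℝ × ℝ => (1 - p.1, 1 - p.2)) ∘ (fun x => (x, g x)) =
      (fun x => (x, 1 - g (1 - x))) ∘ (1 - ·) := by
    funext x; simp
  rw [curveMeasure_eq_map, curveMeasure_eq_map, map_map (by fun_prop) (by fun_prop), hgraph,
    ← map_map (by fun_prop) (by fun_prop), map_one_sub_weightMeasure]

lemma map_swap_curveMeasure_one_sub {w : ℝ → ℝ} (hw : ∀ x, w (1 - x) = w x) :
    (curveMeasure (fun x => 1 - x) w).map Prod.swap = curveMeasure (fun x => 1 - x) w := by
  have hν : (weightMeasure w).map (fun x => 1 - x) = weightMeasure w := by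
    simpa only [hw] using map_one_sub_weightMeasure w
  exact map_swap_map_graph (by fun_prop) hν (ae_of_all _ fun x => sub_sub_cancel 1 x)

section Parabolas

variable {s x y : ℝ}

lemma Lminus_one_sub : Lminus (1 - x) s = 1 - Lplus x s := by
  unfold Lminus Lplus; ring

lemma Lplus_one_sub : Lplus (1 - x) s = 1 - Lminus x s := by
  rw [Lplus, sub_sub_cancel, Lminus]; ring

lemma Lminus_lt_iff (h : y < x + s) : Lminus x s < y ↔ (x + s - y) ^ 2 < 4 * (s * x) := by
  rw [Lminus, show x + s - 2 * √(s * x) < y ↔ (x + s - y) / 2 < √(s * x) by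
    constructor <;> intro <;> linarith, Real.lt_sqrt (by linarith)]
  constructor <;> intro <;> linarith

lemma lt_Lplus_iff (h : x - s < y) : y < Lplus x s ↔ (y - x + s) ^ 2 < 4 * (s * (1 - x)) := by
  have hreflect : y < Lplus x s ↔ Lminus (1 - x) s < 1 - y := by
    rw [Lminus_one_sub]; constructor <;> intro <;> linarith
  rw [hreflect, Lminus_lt_iff (by linarith), show 1 - x + s - (1 - y) = y - x + s by ring]

lemma bulk_comm :
    (Lminus y s < x ∧ x < Lplus y s ∧ y - s < x ∧ x < y + s) ↔
      (Lminus x s < y ∧ y < Lplus x s ∧ x - s < y ∧ y < x + s) := by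
  suffices h : ∀ x y : ℝ, (Lminus y s < x ∧ x < Lplus y s ∧ y - s < x ∧ x < y + s) →
      (Lminus x s < y ∧ y < Lplus x s ∧ x - s < y ∧ y < x + s) from ⟨h x y, h y x⟩
  rintro x y ⟨hm, hp, hl, hu⟩
  rw [Lminus_lt_iff hu] at hm
  rw [lt_Lplus_iff hl] at hp
  exact ⟨(Lminus_lt_iff (by linarith)).2 (by linarith),
    (lt_Lplus_iff (by linarith)).2 (by linarith), by linarith, by linarith⟩

lemma bulk_one_sub :
    (Lminus (1 - x) s < 1 - y ∧ 1 - y < Lplus (1 - x) s ∧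
        1 - x - s < 1 - y ∧ 1 - y < 1 - x + s) ↔
      (Lminus x s < y ∧ y < Lplus x s ∧ x - s < y ∧ y < x + s) := by
  rw [Lminus_one_sub, Lplus_one_sub]
  constructor <;> rintro ⟨h₁, h₂, h₃, h₄⟩ <;>
    exact ⟨by linarith, by linarith, by linarith, by linarith⟩

end Parabolas

section LowerParabola

variable {s x : ℝ}

lemma Lminus_eq_sq (hs : 0 ≤ s) (hx : 0 ≤ x) : Lminus x s = (√s - √x) ^ 2 := by
  rw [Lminus, Real.sqrt_mul hs, sub_sq, Real.sq_sqrt hs, Real.sq_sqrt hx]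
  ring

lemma sqrt_Lminus (hs : 0 ≤ s) (hx : 0 ≤ x) (hxs : x ≤ s) :
    √(Lminus x s) = √s - √x := by
  rw [Lminus_eq_sq hs hx, Real.sqrt_sq (sub_nonneg.2 (Real.sqrt_le_sqrt hxs))]

lemma Lminus_Lminus (hs : 0 ≤ s) (hx : 0 ≤ x) (hxs : x ≤ s) : Lminus (Lminus x s) s = x := by
  rw [Lminus_eq_sq hs (by rw [Lminus_eq_sq hs hx]; positivity), sqrt_Lminus hs hx hxs,
    sub_sub_cancel, Real.sq_sqrt hx]

lemma Lminus_strictAntiOn (hs : 0 ≤ s) : StrictAntiOn (fun x => Lminus x s) (Icc 0 s) := by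
  intro x hx y hy hxy
  simp only [Lminus_eq_sq hs hx.1, Lminus_eq_sq hs hy.1]
  exact pow_lt_pow_left₀ (sub_lt_sub_left (Real.sqrt_lt_sqrt hx.1 hxy) _)
    (sub_nonneg.2 (Real.sqrt_le_sqrt hy.2)) two_ne_zero

lemma hasDerivAt_Lminus (hs : 0 ≤ s) (hx : 0 < x) :
    HasDerivAt (fun x => Lminus x s) (1 - √s / √x) x := by
  have hLminus : (fun x => Lminus x s) = fun x => x + s - 2 * √s * √x := by
    funext y; rw [Lminus, Real.sqrt_mul hs]; ring
  have hslope : 1 - √s / √x = 1 - 2 * √s * (1 / (2 * √x)) := by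
    rw [mul_one_div, mul_div_mul_left _ _ two_ne_zero]
  rw [hLminus, hslope]
  exact ((hasDerivAt_id x).add_const s).sub ((Real.hasDerivAt_sqrt hx.ne').const_mul (2 * √s))

lemma mapsTo_Lminus_Ioo {a b : ℝ} (hs : 0 ≤ s) (ha : 0 ≤ a) (hb : b ≤ s)
    (hab : Lminus a s = b) :
    MapsTo (fun x => Lminus x s) (Ioo a b) (Ioo a b) := by
  intro x hx
  have hIcc : Ioo a b ⊆ Icc 0 s := fun y hy => ⟨ha.trans hy.1.le, hy.2.le.trans hb⟩
  have hbIcc : b ∈ Icc 0 s := ⟨ha.trans (hx.1.trans hx.2).le, hb⟩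
  have haIcc : a ∈ Icc 0 s := ⟨ha, (hx.1.trans hx.2).le.trans hb⟩
  have hba : Lminus b s = a := by rw [← hab, Lminus_Lminus hs ha haIcc.2]
  exact ⟨hba ▸ Lminus_strictAntiOn hs (hIcc hx) hbIcc hx.2,
    hab ▸ Lminus_strictAntiOn hs haIcc (hIcc hx) hx.1⟩

end LowerParabola

section Weights

variable {s : ℝ}

lemma Wminus_eq_one_sub_Wplus (s : ℝ) : Wminus s = 1 - Wplus s := by
  unfold Wminus Wplus; ring

lemma sqrt_two_mul_sub_sq_le_one (s : ℝ) : √(2 * s - s ^ 2) ≤ 1 :=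
  Real.sqrt_le_one.2 (by nlinarith [sq_nonneg (s - 1)])

lemma Wminus_nonneg (s : ℝ) : 0 ≤ Wminus s := by
  have := sqrt_two_mul_sub_sq_le_one s; unfold Wminus; linarith

lemma Wplus_le_one (s : ℝ) : Wplus s ≤ 1 := by
  have := sqrt_two_mul_sub_sq_le_one s; unfold Wplus; linarith

lemma Lminus_Wminus (hs1 : 1 ≤ s) (hs2 : s ≤ 2) : Lminus (Wminus s) s = Wplus s := by
  set q := √(2 * s - s ^ 2) with hq_def
  have hq : q ^ 2 = 2 * s - s ^ 2 := Real.sq_sqrt (by nlinarith)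
  have hqs : q ≤ s := by nlinarith [Real.sqrt_nonneg (2 * s - s ^ 2)]
  have hsqrt : √(s * Wminus s) = (s - q) / 2 := by
    rw [show s * Wminus s = ((s - q) / 2) ^ 2 by unfold Wminus; rw [← hq_def]; nlinarith,
      Real.sqrt_sq (by linarith)]
  rw [Lminus, hsqrt]
  unfold Wminus Wplus
  ring

open Classical in
noncomputable def antidiagonalWeight (s x : ℝ) : ℝ :=
  if 1 < s ∧ ¬(Wminus s < x ∧ x < Wplus s) then 1 else 0

open Classical in
noncomputable def lowerWeight (s x : ℝ) : ℝ :=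
  ((if s ≤ 1 ∧ x < s then 1 else 0)
      + (if 1 < s ∧ Wminus s < x ∧ x < Wplus s then 1 else 0))
    * (1 - √(x / s))

open Classical in
noncomputable def upperWeight (s x : ℝ) : ℝ :=
  ((if s ≤ 1 ∧ 1 - s < x then 1 else 0)
      + (if 1 < s ∧ Wminus s < x ∧ x < Wplus s then 1 else 0))
    * (1 - √((1 - x) / s))

lemma between_W_one_sub {x : ℝ} :
    (Wminus s < 1 - x ∧ 1 - x < Wplus s) ↔ (Wminus s < x ∧ x < Wplus s) := by
  rw [Wminus_eq_one_sub_Wplus]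
  constructor <;> rintro ⟨h₁, h₂⟩ <;> exact ⟨by linarith, by linarith⟩

lemma antidiagonalWeight_one_sub (x : ℝ) :
    antidiagonalWeight s (1 - x) = antidiagonalWeight s x := by
  simp only [antidiagonalWeight, between_W_one_sub]

lemma lowerWeight_one_sub (x : ℝ) : lowerWeight s (1 - x) = upperWeight s x := by
  simp only [lowerWeight, upperWeight, between_W_one_sub,
    show 1 - x < s ↔ 1 - s < x by constructor <;> intro <;> linarith]

lemma exists_lowerWeight_eq_indicator (hs2 : s ≤ 2) :
    ∃ a b, 0 ≤ a ∧ b ≤ s ∧ b ≤ 1 ∧ Lminus a s = b ∧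
      ∀ x, 0 < x → lowerWeight s x = (Ioo a b).indicator (fun x => 1 - √(x / s)) x := by
  rcases le_or_gt s 1 with hs1 | hs1
  · refine ⟨0, s, le_rfl, le_rfl, hs1, by simp [Lminus], fun x hx => ?_⟩
    by_cases hxs : x < s <;> simp [lowerWeight, indicator, hs1, hx, hxs, not_lt.2 hs1]
  · refine ⟨Wminus s, Wplus s, Wminus_nonneg s, (Wplus_le_one s).trans hs1.le, Wplus_le_one s,
      Lminus_Wminus hs1.le hs2, fun x _ => ?_⟩
    simp [lowerWeight, indicator, not_le.2 hs1, hs1]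

end Weights

section LowerCurve

variable {s : ℝ}

lemma measurable_Lminus (s : ℝ) : Measurable fun x => Lminus x s := by
  unfold Lminus; fun_prop

lemma one_sub_sqrt_div_eq {x : ℝ} (hs : 0 < s) (hx : 0 < x) (hxs : x ≤ s) :
    1 - √(x / s) = |1 - √s / √x| * (1 - √(Lminus x s / s)) := by
  have hx' : 0 < √x := Real.sqrt_pos.2 hx
  have hs' : 0 < √s := Real.sqrt_pos.2 hs
  have hslope : |1 - √s / √x| = √s / √x - 1 := by
    rw [abs_of_nonpos (sub_nonpos.2 ((one_le_div hx').2 (Real.sqrt_le_sqrt hxs)))]; ring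
  rw [Real.sqrt_div' _ hs.le, Real.sqrt_div' _ hs.le, sqrt_Lminus hs.le hx.le hxs, hslope]
  field_simp
  ring

lemma map_Lminus_withDensity {a b : ℝ} (hs : 0 < s) (ha : 0 ≤ a) (hb : b ≤ s)
    (hab : Lminus a s = b) :
    ((volume.restrict (Ioo a b)).withDensity fun x => ENNReal.ofReal (1 - √(x / s))).map
        (fun x => Lminus x s) =
      (volume.restrict (Ioo a b)).withDensity fun x => ENNReal.ofReal (1 - √(x / s)) := by
  refine map_restrict_withDensity_eq_self measurableSet_Ioo (measurable_Lminus s)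
    (fun x hx => (hasDerivAt_Lminus hs.le (ha.trans_lt hx.1)).hasDerivWithinAt)
    (mapsTo_Lminus_Ioo hs.le ha hb hab)
    (fun x hx => Lminus_Lminus hs.le (ha.trans hx.1.le) (hx.2.le.trans hb)) fun x hx => ?_
  rw [← ENNReal.ofReal_mul (abs_nonneg _),
    ← one_sub_sqrt_div_eq hs (ha.trans_lt hx.1) (hx.2.le.trans hb)]

lemma map_swap_lower (hs0 : 0 < s) (hs2 : s ≤ 2) :
    (curveMeasure (fun x => Lminus x s) (lowerWeight s)).map Prod.swap =
      curveMeasure (fun x => Lminus x s) (lowerWeight s) := by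
  obtain ⟨a, b, ha, hbs, hb1, hab, hweight⟩ := exists_lowerWeight_eq_indicator hs2
  have hν : weightMeasure (lowerWeight s) =
      (volume.restrict (Ioo a b)).withDensity fun x => ENNReal.ofReal (1 - √(x / s)) := by
    have hsub : Ioo a b ⊆ Icc 0 1 := fun x hx => ⟨ha.trans hx.1.le, hx.2.le.trans hb1⟩
    rw [weightMeasure, ← restrict_restrict_of_subset hsub,
      ← withDensity_indicator measurableSet_Ioo]
    refine withDensity_congr_ae ?_
    filter_upwards [ae_restrict_mem measurableSet_Icc, ae_restrict_of_ae (volume.ae_ne 0)]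
      with x hx hx0
    rw [hweight x (lt_of_le_of_ne hx.1 hx0.symm)]
    by_cases hxab : x ∈ Ioo a b <;> simp [hxab]
  rw [curveMeasure_eq_map, hν]
  refine map_swap_map_graph (measurable_Lminus s) (map_Lminus_withDensity hs0 ha hbs hab) ?_
  filter_upwards [(withDensity_absolutelyContinuous _ _).ae_le (ae_restrict_mem measurableSet_Ioo)]
    with x hx
  exact Lminus_Lminus hs0.le (ha.trans hx.1.le) (hx.2.le.trans hbs)

end LowerCurve

section Kappa

variable {s : ℝ}

open Classical in
noncomputable def bulkDensity (s : ℝ) (p : ℝ × ℝ) : ℝ≥0∞ :=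
  ENNReal.ofReal
    (if Lminus p.1 s < p.2 ∧ p.2 < Lplus p.1 s ∧ p.1 - s < p.2 ∧ p.2 < p.1 + s
     then 1 / (2 * s) else 0)

lemma kappa_eq (s : ℝ) :
    kappa s = volume.withDensity (bulkDensity s)
      + curveMeasure (fun x => 1 - x) (antidiagonalWeight s)
      + curveMeasure (fun x => Lminus x s) (lowerWeight s)
      + curveMeasure (fun x => Lplus x s) (upperWeight s) := rfl

lemma map_reflect_bulk :
    (volume.withDensity (bulkDensity s)).map (fun p : ℝ × ℝ => (1 - p.1, 1 - p.2)) =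
      volume.withDensity (bulkDensity s) := by
  have hreflect : MeasurePreserving (fun p : ℝ × ℝ => (1 - p.1, 1 - p.2)) volume volume := by
    rw [Measure.volume_eq_prod]
    exact (measurePreserving_sub_left volume 1).prod (measurePreserving_sub_left volume 1)
  exact hreflect.map_withDensity_eq_self
    ((measurableEmbedding_subLeft 1).prodMap (measurableEmbedding_subLeft 1))
    fun p => by simp only [bulkDensity, bulk_one_sub]

lemma map_swap_bulk :
    (volume.withDensity (bulkDensity s)).map Prod.swap = volume.withDensity (bulkDensity s) := by
  have hswap : MeasurePreserving (Prod.swap : ℝ × ℝ → ℝ × ℝ) volume volume := by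
    rw [Measure.volume_eq_prod]
    exact Measure.measurePreserving_swap
  exact hswap.map_withDensity_eq_self MeasurableEquiv.prodComm.measurableEmbedding
    fun p => by simp only [bulkDensity, Prod.fst_swap, Prod.snd_swap, bulk_comm]

lemma map_reflect_antidiagonal :
    (curveMeasure (fun x => 1 - x) (antidiagonalWeight s)).map
        (fun p : ℝ × ℝ => (1 - p.1, 1 - p.2)) =
      curveMeasure (fun x => 1 - x) (antidiagonalWeight s) := by
  rw [map_reflect_curveMeasure (by fun_prop)]
  simp only [sub_sub_cancel, antidiagonalWeight_one_sub]

lemma map_reflect_lower :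
    (curveMeasure (fun x => Lminus x s) (lowerWeight s)).map
        (fun p : ℝ × ℝ => (1 - p.1, 1 - p.2)) =
      curveMeasure (fun x => Lplus x s) (upperWeight s) := by
  rw [map_reflect_curveMeasure (measurable_Lminus s)]
  simp only [Lminus_one_sub, sub_sub_cancel, lowerWeight_one_sub]

lemma map_reflect_upper :
    (curveMeasure (fun x => Lplus x s) (upperWeight s)).map
        (fun p : ℝ × ℝ => (1 - p.1, 1 - p.2)) =
      curveMeasure (fun x => Lminus x s) (lowerWeight s) := by
  rw [← map_reflect_lower, map_map (by fun_prop) (by fun_prop)]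
  simp only [Function.comp_def, sub_sub_cancel, Prod.mk.eta, map_id']

lemma map_swap_upper (hs0 : 0 < s) (hs2 : s ≤ 2) :
    (curveMeasure (fun x => Lplus x s) (upperWeight s)).map Prod.swap =
      curveMeasure (fun x => Lplus x s) (upperWeight s) := by
  rw [← map_reflect_lower, map_map measurable_swap (by fun_prop),
    show Prod.swap ∘ (fun p : ℝ × ℝ => (1 - p.1, 1 - p.2)) =
      (fun p : ℝ × ℝ => (1 - p.1, 1 - p.2)) ∘ Prod.swap from rfl,
    ← map_map (by fun_prop) measurable_swap, map_swap_lower hs0 hs2]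

end Kappa

/-- Symmetry of the limiting configuration measure (stated after Theorem 1.3): for
`0 < s ≤ 2`, the measure `κ_s` is invariant under the point reflection
`(x, y) ↦ (1-x, 1-y)` and under the transposition `(x, y) ↦ (y, x)`. -/
theorem kappa_symmetric (s : ℝ) (hs0 : 0 < s) (hs2 : s ≤ 2) :
    Measure.map (fun p : ℝ × ℝ => (1 - p.1, 1 - p.2)) (kappa s) = kappa s
    ∧ Measure.map (fun p : ℝ × ℝ => (p.2, p.1)) (kappa s) = kappa s := by
  have hreflect : Measurable fun p : ℝ × ℝ => (1 - p.1, 1 - p.2) := by fun_prop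
  refine ⟨?_, show (kappa s).map Prod.swap = kappa s from ?_⟩
  · rw [kappa_eq, Measure.map_add _ _ hreflect, Measure.map_add _ _ hreflect,
      Measure.map_add _ _ hreflect, map_reflect_bulk, map_reflect_antidiagonal,
      map_reflect_lower, map_reflect_upper]
    abel
  · rw [kappa_eq, Measure.map_add _ _ measurable_swap, Measure.map_add _ _ measurable_swap,
      Measure.map_add _ _ measurable_swap, map_swap_bulk,
      map_swap_curveMeasure_one_sub antidiagonalWeight_one_sub,
      map_swap_lower hs0 hs2, map_swap_upper hs0 hs2]
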